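/- For the zero-temperature single-mode QFI I(ξ) (as a function of the squeezing fraction ξ ∈ (0,1) for fixed η ∈ (0,1), N_S > 0), the second derivative ∂²_ξ I is strictly negative; i.e., I is strictly concave in ξ. -/

import Mathlib

open Real Filter Topology Set

/-!
Put `x = ξ N_S` and `s = √(x(1+x))`. The first denominator of `I` is `1 - η² + η² w` with
`w = 1 + 2x - 2s`; since `w (1 + 2x + 2s) = 1`, the derivatives `w' = -w/s` and
`(w/s)' = -1/(2s³)` stay rational in `s` and `w`. The numerator of the second derivative of
`(1-ξ)/(1 - η² + η² w)` is then a positive multiple of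
`(1-η²)(-4ws² - P) + η² w (P(4ws - 1) - 4ws²)` with `P = (1-ξ)N_S`, which is negative because
`4ws < 1`. The second summand of `I` has the form `ξ ↦ aξ/(1+bξ)` with `ab ≥ 0`, hence is concave.
-/

noncomputable def I0 (η NS ξ : ℝ) : ℝ :=
  4*NS*((1-ξ) / (1 - 2*η^2*(Real.sqrt (ξ*NS*(1+ξ*NS)) - ξ*NS))
    + ξ*((1-η^2)^2 + η^4) / ((1-η^2)*(1 + 2*ξ*NS*η^2*(1-η^2))))

theorem deriv_deriv_eq_of_eventually_hasDerivAt {𝕜 F : Type*} [NontriviallyNormedField 𝕜]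
    [NormedAddCommGroup F] [NormedSpace 𝕜 F] {f f' : 𝕜 → F} {f'' : F} {x : 𝕜}
    (hf : ∀ᶠ y in 𝓝 x, HasDerivAt f (f' y) y) (hf' : HasDerivAt f' f'' x) :
    deriv (deriv f) x = f'' :=
  EventuallyEq.deriv_eq (hf.mono fun _ hy => hy.deriv) |>.trans hf'.deriv

section Quotients

variable {𝕜 : Type*} [NontriviallyNormedField 𝕜] {D D' : 𝕜 → 𝕜} {a b d D'' x : 𝕜}

theorem hasDerivAt_one_sub_div (hD : HasDerivAt D d x) (h0 : D x ≠ 0) :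
    HasDerivAt (fun y => (1 - y) / D y) ((-D x - (1 - x) * d) / D x ^ 2) x := by
  simpa using ((hasDerivAt_id' x).const_sub 1).fun_div hD h0

theorem hasDerivAt_one_sub_div_deriv (hD : HasDerivAt D (D' x) x) (hD' : HasDerivAt D' D'' x)
    (h0 : D x ≠ 0) :
    HasDerivAt (fun y => (-D y - (1 - y) * D' y) / D y ^ 2)
      ((2 * D x * D' x + 2 * (1 - x) * D' x ^ 2 - (1 - x) * D x * D'') / D x ^ 3) x := by
  refine ((hD.fun_neg.fun_sub (((hasDerivAt_id' x).const_sub 1).fun_mul hD')).fun_div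
    (hD.fun_pow 2) (pow_ne_zero 2 h0)).congr_deriv ?_
  field_simp
  ring

theorem hasDerivAt_mul_div_one_add_mul (h : 1 + b * x ≠ 0) :
    HasDerivAt (fun y => a * y / (1 + b * y)) (a / (1 + b * x) ^ 2) x := by
  refine (((hasDerivAt_id' x).const_mul a).fun_div
    (((hasDerivAt_id' x).const_mul b).const_add 1) h).congr_deriv ?_
  field_simp
  ring

theorem hasDerivAt_div_one_add_mul_sq (h : 1 + b * x ≠ 0) :
    HasDerivAt (fun y => a / (1 + b * y) ^ 2) (-(2 * a * b) / (1 + b * x) ^ 3) x := by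
  refine ((hasDerivAt_const x a).fun_div
    ((((hasDerivAt_id' x).const_mul b).const_add 1).fun_pow 2) (pow_ne_zero 2 h)).congr_deriv ?_
  field_simp
  ring

end Quotients

/-- For `x = sinh² r` squeezing photons this is `e^{-2r}`, the variance of the squeezed
quadrature in vacuum units. -/
noncomputable def squeezedVariance (x : ℝ) : ℝ := 1 + 2 * x - 2 * √(x * (1 + x))

section squeezedVariance

variable {x : ℝ}

theorem squeezedVariance_mul_conj (hx : 0 ≤ x) :
    squeezedVariance x * (1 + 2 * x + 2 * √(x * (1 + x))) = 1 := by
  have := sq_sqrt (by positivity : 0 ≤ x * (1 + x))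
  unfold squeezedVariance
  linear_combination (-4) * this

theorem squeezedVariance_pos (hx : 0 ≤ x) : 0 < squeezedVariance x :=
  pos_of_mul_pos_left ((squeezedVariance_mul_conj hx).symm ▸ one_pos) (by positivity)

theorem four_mul_squeezedVariance_mul_sqrt_lt_one (hx : 0 ≤ x) :
    4 * squeezedVariance x * √(x * (1 + x)) < 1 := by
  have hw := squeezedVariance_pos hx
  have hs : 2 * √(x * (1 + x)) < 1 + 2 * x := by
    nlinarith [sq_sqrt (by positivity : 0 ≤ x * (1 + x)), sqrt_nonneg (x * (1 + x))]
  nlinarith [squeezedVariance_mul_conj hx]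

theorem hasDerivAt_sqrt_mul_one_add (hx : 0 < x) :
    HasDerivAt (fun y => √(y * (1 + y))) ((1 + 2 * x) / (2 * √(x * (1 + x)))) x := by
  refine (((hasDerivAt_id' x).fun_mul ((hasDerivAt_id' x).const_add 1)).sqrt
    (by positivity)).congr_deriv ?_
  ring

theorem hasDerivAt_squeezedVariance (hx : 0 < x) :
    HasDerivAt squeezedVariance (-(squeezedVariance x / √(x * (1 + x)))) x := by
  have hs : 0 < √(x * (1 + x)) := sqrt_pos.2 (by positivity)
  refine ((((hasDerivAt_id' x).const_mul 2).const_add 1).fun_sub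
    ((hasDerivAt_sqrt_mul_one_add hx).const_mul 2)).congr_deriv ?_
  unfold squeezedVariance
  field_simp
  ring

theorem hasDerivAt_squeezedVariance_div_sqrt (hx : 0 < x) :
    HasDerivAt (fun y => squeezedVariance y / √(y * (1 + y)))
      (-1 / (2 * √(x * (1 + x)) ^ 3)) x := by
  have hs : 0 < √(x * (1 + x)) := sqrt_pos.2 (by positivity)
  refine ((hasDerivAt_squeezedVariance hx).fun_div (hasDerivAt_sqrt_mul_one_add hx)
    hs.ne').congr_deriv ?_
  unfold squeezedVariance
  field_simp
  linear_combination 4 * sq_sqrt (by positivity : 0 ≤ x * (1 + x))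

end squeezedVariance

/-- The squeezed-quadrature variance after a pure-loss channel of transmissivity `c = η²`; it is
the first denominator `1 - 2c(√(x(1+x)) - x)` of `I0` at `x = ξN`. -/
noncomputable def lossyVariance (c N ξ : ℝ) : ℝ := 1 - c + c * squeezedVariance (ξ * N)

noncomputable def lossyVarianceDeriv (c N ξ : ℝ) : ℝ :=
  -(c * N * (squeezedVariance (ξ * N) / √(ξ * N * (1 + ξ * N))))

section lossyVariance

variable {c N ξ : ℝ}

theorem lossyVariance_pos (hc0 : 0 ≤ c) (hc1 : c ≤ 1) (h : 0 ≤ ξ * N) :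
    0 < lossyVariance c N ξ := by
  have hw := squeezedVariance_pos h
  unfold lossyVariance
  rcases hc1.lt_or_eq with hc1 | rfl
  · nlinarith [mul_nonneg hc0 hw.le]
  · simpa using hw

theorem hasDerivAt_lossyVariance (h : 0 < ξ * N) :
    HasDerivAt (lossyVariance c N) (lossyVarianceDeriv c N ξ) ξ := by
  refine ((((hasDerivAt_squeezedVariance h).comp ξ (hasDerivAt_mul_const N)).const_mul c).const_add
    (1 - c)).congr_deriv ?_
  unfold lossyVarianceDeriv
  ring

theorem hasDerivAt_lossyVarianceDeriv (h : 0 < ξ * N) :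
    HasDerivAt (lossyVarianceDeriv c N) (c * N ^ 2 / (2 * √(ξ * N * (1 + ξ * N)) ^ 3)) ξ := by
  refine ((((hasDerivAt_squeezedVariance_div_sqrt h).comp ξ (hasDerivAt_mul_const N)).const_mul
    (c * N)).fun_neg).congr_deriv ?_
  ring

end lossyVariance

theorem exists_hasDerivAt_one_sub_div_lossyVariance_deriv_neg {c N ξ : ℝ} (hc0 : 0 < c)
    (hc1 : c ≤ 1) (hN : 0 < N) (hξ0 : 0 < ξ) (hξ1 : ξ < 1) :
    ∃ v < 0, HasDerivAt (fun y => (-lossyVariance c N y - (1 - y) * lossyVarianceDeriv c N y) /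
      lossyVariance c N y ^ 2) v ξ := by
  have hx : 0 < ξ * N := mul_pos hξ0 hN
  have hD := lossyVariance_pos hc0.le hc1 hx.le
  refine ⟨_, div_neg_of_neg_of_pos ?_ (pow_pos hD 3), hasDerivAt_one_sub_div_deriv
    (hasDerivAt_lossyVariance hx) (hasDerivAt_lossyVarianceDeriv hx) hD.ne'⟩
  set s := √(ξ * N * (1 + ξ * N))
  set w := squeezedVariance (ξ * N)
  set P := (1 - ξ) * N
  have hs : 0 < s := sqrt_pos.2 (by positivity)
  have hw : 0 < w := squeezedVariance_pos hx.le
  have hws : 4 * w * s < 1 := four_mul_squeezedVariance_mul_sqrt_lt_one hx.le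
  have hP : 0 < P := mul_pos (by linarith) hN
  have hsplit : 2 * lossyVariance c N ξ * lossyVarianceDeriv c N ξ
      + 2 * (1 - ξ) * lossyVarianceDeriv c N ξ ^ 2
      - (1 - ξ) * lossyVariance c N ξ * (c * N ^ 2 / (2 * s ^ 3))
      = c * N / (2 * s ^ 3) * ((1 - c) * (-(4 * w * s ^ 2) - P)
          + c * w * (P * (4 * w * s - 1) - 4 * w * s ^ 2)) := by
    unfold lossyVariance lossyVarianceDeriv
    field_simp
    ring
  have hgain : P * (4 * w * s - 1) - 4 * w * s ^ 2 < 0 := by nlinarith [mul_pos hw (pow_pos hs 2)]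
  rw [hsplit]
  refine mul_neg_of_pos_of_neg (by positivity) ?_
  nlinarith [mul_nonneg (sub_nonneg.2 hc1) (by positivity : 0 ≤ 4 * w * s ^ 2 + P),
    mul_pos (mul_pos hc0 hw) (neg_pos.2 hgain)]

theorem I0_eq (η N : ℝ) :
    (fun ξ => I0 η N ξ) = fun ξ => 4 * N * ((1 - ξ) / lossyVariance (η ^ 2) N ξ
      + ((1 - η ^ 2) ^ 2 + η ^ 4) / (1 - η ^ 2) * ξ / (1 + 2 * N * η ^ 2 * (1 - η ^ 2) * ξ)) := by
  funext ξ
  unfold I0 lossyVariance squeezedVariance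
  rw [div_mul_eq_div_div]
  ring

noncomputable def I0Deriv (η N ξ : ℝ) : ℝ :=
  4 * N * ((-lossyVariance (η ^ 2) N ξ - (1 - ξ) * lossyVarianceDeriv (η ^ 2) N ξ)
      / lossyVariance (η ^ 2) N ξ ^ 2
    + ((1 - η ^ 2) ^ 2 + η ^ 4) / (1 - η ^ 2) / (1 + 2 * N * η ^ 2 * (1 - η ^ 2) * ξ) ^ 2)

section I0

variable {η N ξ : ℝ}

theorem hasDerivAt_I0 (hη : η ^ 2 ≤ 1) (hN : 0 < N) (hξ : 0 < ξ) :
    HasDerivAt (fun ξ => I0 η N ξ) (I0Deriv η N ξ) ξ := by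
  have hx : 0 < ξ * N := mul_pos hξ hN
  have hb : 0 < 1 + 2 * N * η ^ 2 * (1 - η ^ 2) * ξ := by
    have := sub_nonneg.2 hη
    positivity
  rw [I0_eq]
  exact ((hasDerivAt_one_sub_div (hasDerivAt_lossyVariance hx)
    (lossyVariance_pos (sq_nonneg η) hη hx.le).ne').fun_add
    (hasDerivAt_mul_div_one_add_mul hb.ne')).const_mul (4 * N)

theorem exists_hasDerivAt_I0Deriv_neg (hη0 : 0 < η ^ 2) (hη1 : η ^ 2 ≤ 1) (hN : 0 < N)
    (hξ0 : 0 < ξ) (hξ1 : ξ < 1) : ∃ v < 0, HasDerivAt (I0Deriv η N) v ξ := by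
  obtain ⟨v, hv, hT1⟩ := exists_hasDerivAt_one_sub_div_lossyVariance_deriv_neg hη0 hη1 hN hξ0 hξ1
  set a := ((1 - η ^ 2) ^ 2 + η ^ 4) / (1 - η ^ 2)
  set b := 2 * N * η ^ 2 * (1 - η ^ 2)
  have hb : 0 < 1 + b * ξ := by
    have := sub_nonneg.2 hη1
    positivity
  have hab : 0 ≤ a * b := by
    rcases hη1.lt_or_eq with hη1 | hη1
    · have := sub_pos.2 hη1
      positivity
    · simp [b, hη1]
  refine ⟨_, ?_, (hT1.fun_add (hasDerivAt_div_one_add_mul_sq hb.ne')).const_mul (4 * N)⟩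
  have hT2 : -(2 * a * b) / (1 + b * ξ) ^ 3 ≤ 0 :=
    div_nonpos_of_nonpos_of_nonneg (by linarith) (by positivity)
  exact mul_neg_of_pos_of_neg (by positivity) (by linarith)

end I0

theorem qfi_strictly_concave (η NS : ℝ) (hη0 : 0 < η) (hη1 : η < 1) (hNS : 0 < NS) :
    (∀ ξ ∈ Set.Ioo (0:ℝ) 1, deriv (deriv (fun ξ => I0 η NS ξ)) ξ < 0) ∧
    StrictConcaveOn ℝ (Set.Ioo (0:ℝ) 1) (fun ξ => I0 η NS ξ) := by
  have hc0 : 0 < η ^ 2 := by positivity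
  have hc1 : η ^ 2 ≤ 1 := by nlinarith
  have hI' : ∀ ξ, 0 < ξ → HasDerivAt (fun ξ => I0 η NS ξ) (I0Deriv η NS ξ) ξ :=
    fun _ hξ => hasDerivAt_I0 hc1 hNS hξ
  have hI'' : ∀ ξ ∈ Ioo (0 : ℝ) 1, deriv (deriv fun ξ => I0 η NS ξ) ξ < 0 := by
    intro ξ hξ
    obtain ⟨v, hv, hder⟩ := exists_hasDerivAt_I0Deriv_neg hc0 hc1 hNS hξ.1 hξ.2
    rwa [deriv_deriv_eq_of_eventually_hasDerivAt ((eventually_gt_nhds hξ.1).mono hI') hder]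
  exact ⟨hI'', strictConcaveOn_of_deriv2_neg' (convex_Ioo 0 1)
    (fun ξ hξ => (hI' ξ hξ.1).continuousAt.continuousWithinAt) hI''⟩
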